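/- arXiv:2107.01430 — 11 statements merged into one kernel-verified Lean document; each statement's English description precedes it below -/
import Mathlib

section
/- Let V be a nonzero finite-dimensional vector space, E, F : V → V linear maps with E² = E and dim(EV) = 1. Then tr(FE) ≠ 0 if and only if E F E ≠ 0. -/
theorem stmt2 {K V : Type*} [Field K] [AddCommGroup V] [Module K V]
    [FiniteDimensional K V] [Nontrivial V]
    (E F : V →ₗ[K] V) (hE : E ∘ₗ E = E)
    (hrank : Module.finrank K (LinearMap.range E) = 1) :
    LinearMap.trace K V (F ∘ₗ E) ≠ 0 ↔ E ∘ₗ F ∘ₗ E ≠ 0 := by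
  -- obtain generator v of range E
  obtain ⟨⟨v, hv⟩, hv0, hspan⟩ := finrank_eq_one_iff'.mp hrank
  -- E v = v
  have hEv : E v = v := by
    obtain ⟨x, hx⟩ := hv
    have := congrArg (fun f => f x) hE
    simpa [hx] using this
  have hvne : v ≠ 0 := fun h => hv0 (Subtype.ext h)
  -- E F v ∈ range E, so = c • v
  obtain ⟨c, hc⟩ := hspan ⟨E (F v), ⟨F v, rfl⟩⟩
  have hc' : c • v = E (F v) := congrArg Subtype.val hc
  -- E F E = c • E
  have key : E ∘ₗ F ∘ₗ E = c • E := by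
    ext x
    obtain ⟨a, ha⟩ := hspan ⟨E x, ⟨x, rfl⟩⟩
    have ha' : a • v = E x := congrArg Subtype.val ha
    simp only [LinearMap.comp_apply, LinearMap.smul_apply, ← ha', map_smul]
    rw [← hc']
    rw [smul_comm]
  -- trace E = 1
  have hproj : LinearMap.IsProj (LinearMap.range E) E := by
    constructor
    · intro x; exact ⟨x, rfl⟩
    · rintro x ⟨y, rfl⟩
      have := congrArg (fun f => f y) hE
      simpa using this
  have htrE : LinearMap.trace K V E = 1 := by
    rw [hproj.trace, hrank]; simp
  have htr : LinearMap.trace K V (F ∘ₗ E) = c := by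
    have : LinearMap.trace K V (F ∘ₗ E) = LinearMap.trace K V (E ∘ₗ (F ∘ₗ E)) := by
      have h2 := LinearMap.trace_mul_comm K (F ∘ₗ E) E
      simp only [Module.End.mul_eq_comp] at h2
      rw [LinearMap.comp_assoc, hE] at h2
      exact h2
    rw [this, key, map_smul, htrE, smul_eq_mul, mul_one]
  rw [htr, key]
  constructor
  · intro h hc0
    apply h
    rcases smul_eq_zero.mp hc0 with h1 | h1
    · exact h1
    · exact absurd (congrArg (fun f => f v) h1) (by simpa [hEv] using hvne)
  · intro h hc0
    exact h (by rw [hc0, zero_smul])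
end

section
/- Let q ∈ K be nonzero and not a root of unity, d ≥ 1, θ_i = q^{2i−d} and θ*_i = q^{d−2i} for 0 ≤ i ≤ d. For 0 ≤ i ≤ d, with η_{d−i}(θ₀) = ∏_{j=i+1}^{d}(θ₀ − θ_j) and η*_{d−i}(θ*₀) = ∏_{j=i+1}^{d}(θ*₀ − θ*_j), one has η_{d−i}(θ₀)·η*_{d−i}(θ*₀) = (−1)^{d−i} ([d]_q! / [i]_q!)² (q − q^{−1})^{2d−2i}, where [n]_q = (q^n − q^{−n})/(q − q^{−1}) and [m]_q! = ∏_{n=1}^{m}[n]_q. -/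
/-!
With `a = q ^ j`, each factor pair `(θ₀ - θ_j) (θ*₀ - θ*_j)` equals
`(1 - a²)(1 - a⁻²) = -(a - a⁻¹)² = -((q - q⁻¹) [j]_q)²`, so the left side is
`(-1)^(d-i) (q - q⁻¹)^(2(d-i)) (∏_{j=i+1}^{d} [j]_q)²`, and the last product is `[d]_q! / [i]_q!`.
-/

open Finset

lemma Finset.prod_Ico_eq_div₀ {K : Type*} [Field K] (g : ℕ → K) {i d : ℕ} (hi : i ≤ d)
    (h : ∏ n ∈ range i, g n ≠ 0) :
    ∏ n ∈ Ico i d, g n = (∏ n ∈ range d, g n) / ∏ n ∈ range i, g n := by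
  rw [← prod_range_mul_prod_Ico g hi, mul_div_cancel_left₀ _ h]

lemma Finset.prod_Ico_add_one_eq_prod_Icc {M : Type*} [CommMonoid M] (g : ℕ → M) (i d : ℕ) :
    ∏ n ∈ Ico i d, g (n + 1) = ∏ j ∈ Icc (i + 1) d, g j := by
  rw [prod_Ico_add', Ico_add_one_right_eq_Icc]

lemma Finset.prod_Icc_neg_sq {R : Type*} [CommRing R] (c : R) (g : ℕ → R) (i d : ℕ) :
    ∏ j ∈ Icc (i + 1) d, -(c * g j) ^ 2 =
      (-1) ^ (d - i) * c ^ (2 * (d - i)) * (∏ j ∈ Icc (i + 1) d, g j) ^ 2 := by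
  have hcard : #(Icc (i + 1) d) = d - i := by rw [Nat.card_Icc]; omega
  rw [prod_neg, prod_pow, prod_mul_distrib, prod_const, hcard]
  ring

section
variable {K : Type*} [Field K]

def qInt (q : K) (n : ℤ) : K := (q ^ n - q ^ (-n)) / (q - q⁻¹)

lemma qInt_natCast_add_one (q : K) (n : ℕ) :
    (q ^ ((n : ℤ) + 1) - q ^ (-(n : ℤ) - 1)) / (q - q⁻¹) = qInt q (n + 1 : ℕ) := by
  rw [qInt, Nat.cast_succ, neg_add']

lemma zpow_sub_zpow_neg_ne_zero {q : K} (hq : q ≠ 0) (hroot : ∀ n : ℕ, 0 < n → q ^ n ≠ 1)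
    {n : ℕ} (hn : 0 < n) : q ^ (n : ℤ) - q ^ (-(n : ℤ)) ≠ 0 := by
  intro h
  rw [zpow_neg, zpow_natCast, sub_eq_zero] at h
  have hsq : q ^ (2 * n) = 1 := by
    rw [two_mul, pow_add]
    nth_rw 2 [h]
    exact mul_inv_cancel₀ (pow_ne_zero n hq)
  exact hroot (2 * n) (by omega) hsq

lemma sub_inv_ne_zero {q : K} (hq : q ≠ 0) (hroot : ∀ n : ℕ, 0 < n → q ^ n ≠ 1) :
    q - q⁻¹ ≠ 0 := by
  simpa using zpow_sub_zpow_neg_ne_zero hq hroot one_pos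

lemma qInt_ne_zero {q : K} (hq : q ≠ 0) (hroot : ∀ n : ℕ, 0 < n → q ^ n ≠ 1)
    {n : ℕ} (hn : 0 < n) : qInt q n ≠ 0 :=
  div_ne_zero (zpow_sub_zpow_neg_ne_zero hq hroot hn) (sub_inv_ne_zero hq hroot)

lemma zpow_sub_mul_zpow_sub {q : K} (hq : q ≠ 0) (d j : ℤ) :
    (q ^ (-d) - q ^ (2 * j - d)) * (q ^ d - q ^ (d - 2 * j)) = -(q ^ j - q ^ (-j)) ^ 2 := by
  simp only [zpow_neg, zpow_sub₀ hq, zpow_mul', zpow_two]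
  have hd : q ^ d ≠ 0 := zpow_ne_zero d hq
  have hj : q ^ j ≠ 0 := zpow_ne_zero j hq
  field_simp
  ring

lemma zpow_sub_mul_zpow_sub_eq_qInt {q : K} (hq : q ≠ 0) (hc : q - q⁻¹ ≠ 0) (d j : ℤ) :
    (q ^ (-d) - q ^ (2 * j - d)) * (q ^ d - q ^ (d - 2 * j)) = -((q - q⁻¹) * qInt q j) ^ 2 := by
  rw [zpow_sub_mul_zpow_sub hq, qInt, mul_div_cancel₀ _ hc]

end

theorem stmt7_general {K : Type*} [Field K] (q : K) (hq : q ≠ 0)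
    (hroot : ∀ n : ℕ, 0 < n → q ^ n ≠ 1)
    (d i : ℕ) (hi : i ≤ d) :
    (∏ j ∈ Finset.Icc (i + 1) d, (q ^ (-(d : ℤ)) - q ^ (2 * (j : ℤ) - d))) *
      (∏ j ∈ Finset.Icc (i + 1) d, (q ^ (d : ℤ) - q ^ ((d : ℤ) - 2 * j))) =
    (-1) ^ (d - i) *
      ((∏ n ∈ Finset.range d, ((q ^ ((n : ℤ) + 1) - q ^ (-(n : ℤ) - 1)) / (q - q⁻¹))) /
       (∏ n ∈ Finset.range i, ((q ^ ((n : ℤ) + 1) - q ^ (-(n : ℤ) - 1)) / (q - q⁻¹)))) ^ 2 *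
      (q - q⁻¹) ^ (2 * d - 2 * i) := by
  have hc := sub_inv_ne_zero hq hroot
  have hfact : ∏ n ∈ range i, qInt q (n + 1 : ℕ) ≠ 0 :=
    prod_ne_zero_iff.mpr fun n _ => qInt_ne_zero hq hroot n.succ_pos
  simp only [qInt_natCast_add_one]
  rw [← prod_mul_distrib, ← prod_Ico_eq_div₀ _ hi hfact,
    prod_Ico_add_one_eq_prod_Icc (fun j : ℕ => qInt q j),
    prod_congr rfl fun (j : ℕ) _ => zpow_sub_mul_zpow_sub_eq_qInt hq hc d j,
    prod_Icc_neg_sq, ← Nat.mul_sub]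
  ring

theorem stmt7 {K : Type*} [Field K] (q : K) (hq : q ≠ 0)
    (hroot : ∀ n : ℕ, 0 < n → q ^ n ≠ 1)
    (d i : ℕ) (hd : 1 ≤ d) (hi : i ≤ d) :
    (∏ j ∈ Finset.Icc (i + 1) d, (q ^ (-(d : ℤ)) - q ^ (2 * (j : ℤ) - d))) *
      (∏ j ∈ Finset.Icc (i + 1) d, (q ^ (d : ℤ) - q ^ ((d : ℤ) - 2 * j))) =
    (-1) ^ (d - i) *
      ((∏ n ∈ Finset.range d, ((q ^ ((n : ℤ) + 1) - q ^ (-(n : ℤ) - 1)) / (q - q⁻¹))) /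
       (∏ n ∈ Finset.range i, ((q ^ ((n : ℤ) + 1) - q ^ (-(n : ℤ) - 1)) / (q - q⁻¹)))) ^ 2 *
      (q - q⁻¹) ^ (2 * d - 2 * i) :=
  stmt7_general q hq hroot d i hi
end

section
/- Let q be nonzero and not a root of unity, d ≥ 1, θ_i = q^{2i−d}, θ*_i = q^{d−2i} for 0 ≤ i ≤ d, and let ζ₀,…,ζ_d ∈ K. Define P(x) = Σ_{i=0}^d (−1)^i ζ_i x^i / ([i]_q!)². Then Σ_{i=0}^d η_{d−i}(θ₀) η*_{d−i}(θ*₀) ζ_i = (−1)^d ([d]_q!)² (q−q^{−1})^{2d} · P(1/(q−q^{−1})²). -/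
/-!
Each factor of `η_{d-i}(θ₀) η*_{d-i}(θ*₀)` is `(θ₀ - θ_j)(θ*₀ - θ*_j) = -(q^j - q^{-j})²`, so the
`i`-th term on the left is `(-1)^{d-i} (∏_{j=i+1}^{d} (q^j - q^{-j}))² ζ_i`. Since
`[n]_q! (q - q⁻¹)^n = ∏_{j=1}^{n} (q^j - q^{-j})`, the `i`-th term on the right is the same, with
`∏_{j=1}^{d} / ∏_{j=1}^{i} = ∏_{j=i+1}^{d}`. As `q` is not a root of unity, the `q^j - q^{-j}`
with `j > 0` are nonzero, so the `q`-factorials are invertible.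
-/

open Finset

section QDiff

variable {K : Type*} [Field K]

def qDiff (q : K) (n : ℤ) : K := q ^ n - q ^ (-n)

lemma qDiff_one (q : K) : qDiff q 1 = q - q⁻¹ := by
  simp [qDiff]

lemma qDiff_ne_zero {q : K} (hq : q ≠ 0) (hroot : ∀ n : ℕ, 0 < n → q ^ n ≠ 1)
    {n : ℕ} (hn : 0 < n) : qDiff q n ≠ 0 := by
  intro h
  apply hroot (2 * n) (by omega)
  have : q ^ (n : ℤ) = q ^ (-(n : ℤ)) := sub_eq_zero.mp h
  rw [← zpow_natCast, Nat.cast_mul, Nat.cast_two, two_mul, zpow_add₀ hq]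
  nth_rw 2 [this]
  rw [← zpow_add₀ hq, add_neg_cancel, zpow_zero]

lemma prod_range_qDiff_succ_div (q : K) (m : ℕ) :
    ∏ n ∈ range m, ((q ^ ((n : ℤ) + 1) - q ^ (-(n : ℤ) - 1)) / (q - q⁻¹)) =
      (∏ j ∈ Ioc 0 m, qDiff q j) / (q - q⁻¹) ^ m := by
  induction m with
  | zero => simp
  | succ n ih =>
    rw [prod_range_succ, ih, prod_Ioc_succ_top n.zero_le, pow_succ, div_mul_div_comm,
      qDiff, Nat.cast_succ, neg_add']

lemma theta_sub_mul_thetaStar_sub {q : K} (hq : q ≠ 0) (d j : ℤ) :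
    (q ^ (-d) - q ^ (2 * j - d)) * (q ^ d - q ^ (d - 2 * j)) = -qDiff q j ^ 2 := by
  have h1 : q ^ (-d) - q ^ (2 * j - d) = -(q ^ (j - d) * qDiff q j) := by
    rw [qDiff, mul_sub, ← zpow_add₀ hq, ← zpow_add₀ hq]; ring_nf
  have h2 : q ^ d - q ^ (d - 2 * j) = q ^ (d - j) * qDiff q j := by
    rw [qDiff, mul_sub, ← zpow_add₀ hq, ← zpow_add₀ hq]; ring_nf
  have h3 : q ^ (j - d) * q ^ (d - j) = 1 := by
    rw [← zpow_add₀ hq, sub_add_sub_cancel', sub_self, zpow_zero]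
  rw [h1, h2]
  linear_combination (-qDiff q j ^ 2) * h3

lemma prod_eta_mul_prod_etaStar {q : K} (hq : q ≠ 0) (i d : ℕ) :
    (∏ j ∈ Icc (i + 1) d, (q ^ (-(d : ℤ)) - q ^ (2 * (j : ℤ) - d))) *
        (∏ j ∈ Icc (i + 1) d, (q ^ (d : ℤ) - q ^ ((d : ℤ) - 2 * j))) =
      (-1) ^ (d - i) * (∏ j ∈ Ioc i d, qDiff q j) ^ 2 := by
  rw [← prod_mul_distrib, Icc_add_one_left_eq_Ioc,
    prod_congr rfl fun (j : ℕ) _ => theta_sub_mul_thetaStar_sub hq d j, prod_neg, Nat.card_Ioc,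
    prod_pow]

end QDiff

theorem stmt9_general {K : Type*} [Field K] (q : K) (hq : q ≠ 0)
    (hroot : ∀ n : ℕ, 0 < n → q ^ n ≠ 1)
    (d : ℕ) (ζ : ℕ → K) :
    ∑ i ∈ Finset.range (d + 1),
        (∏ j ∈ Finset.Icc (i + 1) d, (q ^ (-(d : ℤ)) - q ^ (2 * (j : ℤ) - d))) *
          (∏ j ∈ Finset.Icc (i + 1) d, (q ^ (d : ℤ) - q ^ ((d : ℤ) - 2 * j))) * ζ i =
      (-1) ^ d *
        (∏ n ∈ Finset.range d, ((q ^ ((n : ℤ) + 1) - q ^ (-(n : ℤ) - 1)) / (q - q⁻¹))) ^ 2 *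
        (q - q⁻¹) ^ (2 * d) *
        ∑ i ∈ Finset.range (d + 1),
          (-1) ^ i * ζ i * (1 / (q - q⁻¹) ^ 2) ^ i /
            (∏ n ∈ Finset.range i, ((q ^ ((n : ℤ) + 1) - q ^ (-(n : ℤ) - 1)) / (q - q⁻¹))) ^ 2 := by
  have hc : q - q⁻¹ ≠ 0 := qDiff_one q ▸ qDiff_ne_zero hq hroot one_pos
  rw [prod_range_qDiff_succ_div, mul_sum]
  refine sum_congr rfl fun i hi => ?_
  have hid : i ≤ d := Nat.lt_succ_iff.mp (mem_range.mp hi)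
  have hFi : ∏ j ∈ Ioc 0 i, qDiff q j ≠ 0 :=
    prod_ne_zero_iff.mpr fun j hj => qDiff_ne_zero hq hroot (mem_Ioc.mp hj).1
  have hsign : (-1 : K) ^ d = (-1) ^ (d - i) * (-1) ^ i := by
    rw [← pow_add, Nat.sub_add_cancel hid]
  rw [prod_range_qDiff_succ_div, prod_eta_mul_prod_etaStar hq,
    ← prod_Ioc_consecutive _ i.zero_le hid, hsign]
  generalize q - q⁻¹ = c at hc ⊢
  rw [one_div, inv_pow]
  field_simp
  rw [pow_right_comm _ i, neg_one_sq, one_pow]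
  ring

theorem stmt9 {K : Type*} [Field K] (q : K) (hq : q ≠ 0)
    (hroot : ∀ n : ℕ, 0 < n → q ^ n ≠ 1)
    (d : ℕ) (hd : 1 ≤ d) (ζ : ℕ → K) :
    ∑ i ∈ Finset.range (d + 1),
        (∏ j ∈ Finset.Icc (i + 1) d, (q ^ (-(d : ℤ)) - q ^ (2 * (j : ℤ) - d))) *
          (∏ j ∈ Finset.Icc (i + 1) d, (q ^ (d : ℤ) - q ^ ((d : ℤ) - 2 * j))) * ζ i =
      (-1) ^ d *
        (∏ n ∈ Finset.range d, ((q ^ ((n : ℤ) + 1) - q ^ (-(n : ℤ) - 1)) / (q - q⁻¹))) ^ 2 *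
        (q - q⁻¹) ^ (2 * d) *
        ∑ i ∈ Finset.range (d + 1),
          (-1) ^ i * ζ i * (1 / (q - q⁻¹) ^ 2) ^ i /
            (∏ n ∈ Finset.range i, ((q ^ ((n : ℤ) + 1) - q ^ (-(n : ℤ) - 1)) / (q - q⁻¹))) ^ 2 :=
  stmt9_general q hq hroot d ζ
end

section
/- Let V = U₀ ⊕ U₁ ⊕ ⋯ ⊕ U_d be a finite-dimensional vector space, q nonzero and not a root of unity, θ_i = q^{2i−d}. Suppose A : V → V satisfies (A − θ_i I)U_i ⊆ U_{i+1} for 0 ≤ i ≤ d (with U_{d+1} = 0), and let K : V → V act on U_i as multiplication by q^{d−2i}. Then (qKA − q^{−1}AK)/(q − q^{−1}) = I. -/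
theorem stmt11 {F V : Type*} [Field F] [AddCommGroup V] [Module F V]
    [FiniteDimensional F V]
    (q : F) (hq : q ≠ 0) (hroot : ∀ n : ℕ, 0 < n → q ^ n ≠ 1)
    (d : ℕ) (hd : 1 ≤ d) (U : ℕ → Submodule F V)
    (hbot : ∀ i, d < i → U i = ⊥)
    (hnz : ∀ i, i ≤ d → U i ≠ ⊥)
    (hind : iSupIndep U)
    (hspan : (⨆ i, U i) = ⊤)
    (A K : V →ₗ[F] V)
    (hA : ∀ i, i ≤ d → ∀ v ∈ U i, A v - q ^ (2 * (i : ℤ) - d) • v ∈ U (i + 1))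
    (hK : ∀ i, i ≤ d → ∀ v ∈ U i, K v = q ^ ((d : ℤ) - 2 * i) • v) :
    (q - q⁻¹)⁻¹ • (q • (K ∘ₗ A) - q⁻¹ • (A ∘ₗ K)) = LinearMap.id := by
  have hq2 : q - q⁻¹ ≠ 0 := by
    intro h
    apply hroot 2 (by norm_num)
    have : q * q = 1 := by
      have := sub_eq_zero.mp h
      field_simp at this
      linear_combination this
    linear_combination this
  set f := (q - q⁻¹)⁻¹ • (q • (K ∘ₗ A) - q⁻¹ • (A ∘ₗ K)) with hf
  ext v
  have hv : v ∈ (⨆ i, U i) := by rw [hspan]; trivial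
  show f v = v
  induction hv using Submodule.iSup_induction' with
  | mem i v hvi =>
    rcases le_or_gt i d with hi | hi
    · -- main computation
      set θ : F := q ^ (2 * (i : ℤ) - (d : ℤ)) with hθ
      set κ : F := q ^ ((d : ℤ) - 2 * (i : ℤ)) with hκ
      have hθκ : θ * κ = 1 := by
        rw [hθ, hκ, ← zpow_add₀ hq]
        norm_num
      have hw : A v - θ • v ∈ U (i + 1) := hA i hi v hvi
      set w : V := A v - θ • v with hwdef
      have hAv : A v = θ • v + w := by rw [hwdef]; abel
      have hKv : K v = κ • v := hK i hi v hvi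
      have hAKv : A (K v) = κ • θ • v + κ • w := by
        rw [hKv, map_smul, hAv, smul_add]
      rcases eq_or_lt_of_le hi with rfl | hilt
      · -- i = d, w = 0
        have hw0 : w = 0 := by
          have := hbot (i + 1) (by omega)
          rw [this] at hw
          simpa using hw
        have hKAv : K (A v) = θ • κ • v := by
          rw [hAv, hw0, add_zero, map_smul, hKv]
        simp only [hf, LinearMap.smul_apply, LinearMap.sub_apply, LinearMap.comp_apply,
          hKAv, hAKv, hw0, smul_zero, add_zero]
        rw [smul_smul, smul_smul, smul_smul, smul_smul, mul_assoc q θ κ, hθκ,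
          mul_assoc q⁻¹ κ θ, mul_comm κ θ, hθκ,
          mul_one, mul_one, ← sub_smul, smul_smul, inv_mul_cancel₀ hq2, one_smul]
      · -- i < d
        have hKw : K w = (κ * (q ^ (2:ℤ))⁻¹) • w := by
          have := hK (i + 1) (by omega) w hw
          rw [this]
          congr 1
          rw [hκ, ← zpow_neg, ← zpow_add₀ hq]
          congr 1
          push_cast
          ring
        have hKAv : K (A v) = θ • κ • v + (κ * (q ^ (2:ℤ))⁻¹) • w := by
          rw [hAv, map_add, map_smul, hKv, hKw]
        simp only [hf, LinearMap.smul_apply, LinearMap.sub_apply, LinearMap.comp_apply,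
          hKAv, hAKv]
        have hq2z : (q ^ (2:ℤ)) = q * q := by
          rw [show (2:ℤ) = 1 + 1 by norm_num, zpow_add₀ hq, zpow_one]
        rw [smul_add, smul_add, smul_smul, smul_smul, smul_smul, smul_smul,
          smul_smul, smul_smul, mul_assoc q θ κ, hθκ,
          mul_assoc q⁻¹ κ θ, mul_comm κ θ, hθκ, mul_one, mul_one]
        have hcoef : q * (κ * (q ^ (2:ℤ))⁻¹) = q⁻¹ * κ := by
          rw [hq2z]
          field_simp
        rw [hcoef]
        have heq : q • v + (q⁻¹ * κ) • w - (q⁻¹ • v + (q⁻¹ * κ) • w) = (q - q⁻¹) • v := by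
          rw [sub_smul]; abel
        rw [heq, smul_smul, inv_mul_cancel₀ hq2, one_smul]
    · -- U i = ⊥
      have : v = 0 := by
        have := hbot i hi
        rw [this] at hvi
        simpa using hvi
      simp [this]
  | zero => simp
  | add x y _ _ hx hy =>
    rw [map_add, hx, hy]
end

section
/- Let V = U₀ ⊕ ⋯ ⊕ U_d, q nonzero and not a root of unity, θ*_i = q^{d−2i}. Suppose A* : V → V satisfies (A* − θ*_i I)U_i ⊆ U_{i−1} for 0 ≤ i ≤ d (with U_{−1} = 0), and let K : V → V act on U_i as q^{d−2i}. Then (qK^{−1}A* − q^{−1}A*K^{−1})/(q − q^{−1}) = I. -/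
/-!
On `U i` the operator `K⁻¹` is the scalar `c = q ^ (2i - d) = θ*ᵢ⁻¹`, and `A*` acts as
`θ*ᵢ` plus a part `w` landing in `U (i - 1)`, where `K⁻¹` is the scalar `q⁻² c`. Hence
`K⁻¹ A* v = v + q⁻² c w` and `A* K⁻¹ v = v + c w`; in `q K⁻¹ A* v - q⁻¹ A* K⁻¹ v` the
`w`-terms cancel, leaving `(q - q⁻¹) v`. Since the `U i` span `V`, the identity follows,
and `q - q⁻¹ ≠ 0` because `q² ≠ 1`.
-/

lemma sub_inv_ne_zero_of_sq_ne_one {F : Type*} [Field F] {q : F} (hq : q ≠ 0)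
    (hq2 : q ^ 2 ≠ 1) : q - q⁻¹ ≠ 0 := by
  rw [sub_ne_zero]
  intro h
  apply hq2
  rw [sq]
  nth_rw 2 [h]
  exact mul_inv_cancel₀ hq

lemma LinearMap.ext_of_iSup_eq_top {R M N ι : Type*} [Semiring R] [AddCommMonoid M]
    [Module R M] [AddCommMonoid N] [Module R N] {U : ι → Submodule R M}
    (hU : ⨆ i, U i = ⊤) {f g : M →ₗ[R] N} (h : ∀ i, ∀ v ∈ U i, f v = g v) : f = g :=
  LinearMap.ext_on (s := ⋃ i, (U i : Set M)) (by rw [← Submodule.iSup_eq_span, hU])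
    fun _ hv ↦ by
      obtain ⟨i, hi⟩ := Set.mem_iUnion.mp hv
      exact h i _ hi

lemma smul_map_map_sub_inv_smul_map_map_eq {F V : Type*} [Field F] [AddCommGroup V]
    [Module F V] {A Kinv : V →ₗ[F] V} {q c : F} (hq : q ≠ 0) (hc : c ≠ 0) {v w : V}
    (hv : Kinv v = c • v) (hw : Kinv w = (q ^ (-2 : ℤ) * c) • w) (hA : A v = c⁻¹ • v + w) :
    q • Kinv (A v) - q⁻¹ • A (Kinv v) = (q - q⁻¹) • v := by
  rw [hA, map_add, map_smul, hv, hw, map_smul, hA]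
  have hq2 : q * (q ^ (-2 : ℤ) * c) = q⁻¹ * c := by
    rw [zpow_neg, zpow_two]
    field_simp
  simp only [smul_add, smul_smul, inv_mul_cancel₀ hc, mul_inv_cancel₀ hc, one_smul, hq2]
  module

theorem stmt12_general {F V : Type*} [Field F] [AddCommGroup V] [Module F V]
    (q : F) (hq : q ≠ 0) (hroot : ∀ n : ℕ, 0 < n → q ^ n ≠ 1)
    (d : ℕ) (U : ℕ → Submodule F V)
    (hbot : ∀ i, d < i → U i = ⊥)
    (hspan : (⨆ i, U i) = ⊤)
    (Astar Kinv : V →ₗ[F] V)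
    (hKinv : ∀ i, i ≤ d → ∀ v ∈ U i, Kinv v = q ^ (2 * (i : ℤ) - d) • v)
    (hA0 : ∀ v ∈ U 0, Astar v = q ^ (d : ℤ) • v)
    (hAstar : ∀ i, 1 ≤ i → i ≤ d → ∀ v ∈ U i,
      Astar v - q ^ ((d : ℤ) - 2 * i) • v ∈ U (i - 1)) :
    (q - q⁻¹)⁻¹ • (q • (Kinv ∘ₗ Astar) - q⁻¹ • (Astar ∘ₗ Kinv)) = LinearMap.id := by
  have hqq : q - q⁻¹ ≠ 0 := sub_inv_ne_zero_of_sq_ne_one hq (hroot 2 two_pos)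
  refine LinearMap.ext_of_iSup_eq_top hspan fun i v hv ↦ ?_
  suffices q • Kinv (Astar v) - q⁻¹ • Astar (Kinv v) = (q - q⁻¹) • v by
    simp [this, smul_smul, inv_mul_cancel₀ hqq]
  rcases lt_or_ge d i with hdi | hid
  · rw [hbot i hdi, Submodule.mem_bot] at hv
    simp [hv]
  have hθ : (q ^ (2 * (i : ℤ) - d))⁻¹ = q ^ ((d : ℤ) - 2 * i) := by
    rw [← zpow_neg, neg_sub]
  refine smul_map_map_sub_inv_smul_map_map_eq hq (zpow_ne_zero _ hq) (hKinv i hid v hv)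
    (w := Astar v - q ^ ((d : ℤ) - 2 * i) • v) ?_ (by rw [hθ]; abel)
  rcases Nat.eq_zero_or_pos i with rfl | hi
  · simp [hA0 v hv]
  · rw [hKinv (i - 1) (by omega) _ (hAstar i hi hid v hv), ← zpow_add₀ hq]
    congr 2
    push_cast [hi]
    ring

theorem stmt12 {F V : Type*} [Field F] [AddCommGroup V] [Module F V]
    [FiniteDimensional F V]
    (q : F) (hq : q ≠ 0) (hroot : ∀ n : ℕ, 0 < n → q ^ n ≠ 1)
    (d : ℕ) (hd : 1 ≤ d) (U : ℕ → Submodule F V)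
    (hbot : ∀ i, d < i → U i = ⊥)
    (hnz : ∀ i, i ≤ d → U i ≠ ⊥)
    (hind : iSupIndep U)
    (hspan : (⨆ i, U i) = ⊤)
    (Astar K Kinv : V →ₗ[F] V)
    (hKinvK : Kinv ∘ₗ K = LinearMap.id) (hKKinv : K ∘ₗ Kinv = LinearMap.id)
    (hK : ∀ i, i ≤ d → ∀ v ∈ U i, K v = q ^ ((d : ℤ) - 2 * i) • v)
    (hKinv : ∀ i, i ≤ d → ∀ v ∈ U i, Kinv v = q ^ (2 * (i : ℤ) - d) • v)
    (hA0 : ∀ v ∈ U 0, Astar v = q ^ (d : ℤ) • v)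
    (hAstar : ∀ i, 1 ≤ i → i ≤ d → ∀ v ∈ U i,
      Astar v - q ^ ((d : ℤ) - 2 * i) • v ∈ U (i - 1)) :
    (q - q⁻¹)⁻¹ • (q • (Kinv ∘ₗ Astar) - q⁻¹ • (Astar ∘ₗ Kinv)) = LinearMap.id :=
  stmt12_general q hq hroot d U hbot hspan Astar Kinv hKinv hA0 hAstar
end

section
/- Let A, A*, K be linear maps on a finite-dimensional vector space with qKA − q^{−1}AK = (q−q^{−1})I, where q² ≠ 1. Then A³K − [3]_q A²KA + [3]_q AKA² − KA³ = 0, where [3]_q = q² + 1 + q^{−2}. -/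
theorem stmt13 {F V : Type*} [Field F] [AddCommGroup V] [Module F V]
    [FiniteDimensional F V]
    (q : F) (hq : q ≠ 0) (hq2 : q ^ 2 ≠ 1)
    (A Astar K : Module.End F V)
    (hrel : q • (K * A) - q⁻¹ • (A * K) = (q - q⁻¹) • (1 : Module.End F V)) :
    A ^ 3 * K - (q ^ 2 + 1 + q⁻¹ ^ 2) • (A ^ 2 * K * A)
      + (q ^ 2 + 1 + q⁻¹ ^ 2) • (A * K * A ^ 2) - K * A ^ 3 = 0 := by
  have h : K * A = (q⁻¹ * q⁻¹) • (A * K) + (q⁻¹ * (q - q⁻¹)) • (1 : Module.End F V) := by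
    have h0 := congrArg (fun x => q⁻¹ • x) hrel
    simp only [smul_sub, smul_smul, inv_mul_cancel₀ hq, one_smul] at h0
    linear_combination (norm := module) h0
  have h1 : A ^ 2 * K * A = (q⁻¹ * q⁻¹) • (A ^ 3 * K)
      + (q⁻¹ * (q - q⁻¹)) • (A ^ 2) := by
    have h0 := congrArg (fun x => A ^ 2 * x) h
    simp only [mul_add, mul_smul_comm, mul_one] at h0
    have e1 : A ^ 2 * K * A = A ^ 2 * (K * A) := by noncomm_ring
    have e2 : A ^ 2 * (A * K) = A ^ 3 * K := by noncomm_ring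
    rw [e1, h0, e2]
  have h2 : A * K * A ^ 2 = (q⁻¹ * q⁻¹) • (A ^ 2 * K * A)
      + (q⁻¹ * (q - q⁻¹)) • (A ^ 2) := by
    have h0 := congrArg (fun x => A * x * A) h
    simp only [add_mul, mul_add, mul_smul_comm, smul_mul_assoc, mul_one, one_mul] at h0
    have e1 : A * K * A ^ 2 = A * (K * A) * A := by noncomm_ring
    have e2 : A * (A * K) * A = A ^ 2 * K * A := by noncomm_ring
    have e3 : A * A = A ^ 2 := by noncomm_ring
    rw [e1, h0, e2, e3]
  have h3 : K * A ^ 3 = (q⁻¹ * q⁻¹) • (A * K * A ^ 2)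
      + (q⁻¹ * (q - q⁻¹)) • (A ^ 2) := by
    have h0 := congrArg (fun x => x * A ^ 2) h
    simp only [add_mul, smul_mul_assoc, one_mul] at h0
    have e1 : K * A ^ 3 = K * A * A ^ 2 := by noncomm_ring
    have e2 : A * K * A ^ 2 = A * K * A ^ 2 := rfl
    rw [e1, h0]
  have hq' : q * q⁻¹ = 1 := mul_inv_cancel₀ hq
  rw [h3, h2, h1]
  match_scalars
  · linear_combination (-(q * q⁻¹ + 1) * (1 - q⁻¹ ^ 2)) * hq'
  · linear_combination ((q * q⁻¹ - q⁻¹ ^ 2) * (q * q⁻¹ + 1)) * hq'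
end

section
/- Suppose A and A* satisfy the q-Serre relation A³A* − [3]_q A²A*A + [3]_q AA*A² − A*A³ = 0, and K satisfies qKA − q^{−1}AK = (q−q^{−1})I and qK^{−1}A* − q^{−1}A*K^{−1} = (q−q^{−1})I with K invertible. Let t ∈ K and set B = A, B* = tA* + (1−t)K. Then B³B* − [3]_q B²B*B + [3]_q BB*B² − B*B³ = 0. -/
theorem stmt15 {F V : Type*} [Field F] [AddCommGroup V] [Module F V]
    [FiniteDimensional F V]
    (q : F) (hq : q ≠ 0) (hroot : ∀ n : ℕ, 0 < n → q ^ n ≠ 1)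
    (A Astar K Kinv : Module.End F V)
    (hKinvK : Kinv * K = 1) (hKKinv : K * Kinv = 1)
    (hSerre : A ^ 3 * Astar - (q ^ 2 + 1 + q⁻¹ ^ 2) • (A ^ 2 * Astar * A)
      + (q ^ 2 + 1 + q⁻¹ ^ 2) • (A * Astar * A ^ 2) - Astar * A ^ 3 = 0)
    (hrel : q • (K * A) - q⁻¹ • (A * K) = (q - q⁻¹) • (1 : Module.End F V))
    (hrel' : q • (Kinv * Astar) - q⁻¹ • (Astar * Kinv) = (q - q⁻¹) • (1 : Module.End F V))
    (t : F) (B Bstar : Module.End F V)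
    (hB : B = A) (hBstar : Bstar = t • Astar + (1 - t) • K) :
    B ^ 3 * Bstar - (q ^ 2 + 1 + q⁻¹ ^ 2) • (B ^ 2 * Bstar * B)
      + (q ^ 2 + 1 + q⁻¹ ^ 2) • (B * Bstar * B ^ 2) - Bstar * B ^ 3 = 0 := by
  rw [hB, hBstar]
  have hu : q * q⁻¹ = 1 := mul_inv_cancel₀ hq
  -- commutation relation solved for K * A
  have h1 : K * A = (q⁻¹ ^ 2) • (A * K) + (1 - q⁻¹ ^ 2) • (1 : Module.End F V) := by
    apply smul_right_injective (Module.End F V) hq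
    show q • (K * A) = q • (q⁻¹ ^ 2 • (A * K) + (1 - q⁻¹ ^ 2) • (1 : Module.End F V))
    rw [smul_add, smul_smul, smul_smul, sub_eq_iff_eq_add.mp hrel]
    have e1 : q * q⁻¹ ^ 2 = q⁻¹ := by linear_combination q⁻¹ * hu
    have e2 : q * (1 - q⁻¹ ^ 2) = q - q⁻¹ := by linear_combination (-q⁻¹) * hu
    rw [e1, e2]; abel
  have h2 : K * A ^ 2 = (q⁻¹ ^ 4) • (A ^ 2 * K) + (1 - q⁻¹ ^ 4) • A := by
    have e : K * A ^ 2 = (K * A) * A := by noncomm_ring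
    rw [e, h1, add_mul, smul_mul_assoc, smul_mul_assoc, one_mul, mul_assoc, h1]
    have a1 : A * ((q⁻¹ ^ 2) • (A * K) + (1 - q⁻¹ ^ 2) • (1 : Module.End F V))
        = (q⁻¹ ^ 2) • (A ^ 2 * K) + (1 - q⁻¹ ^ 2) • A := by
      have b1 : A * (A * K) = A ^ 2 * K := by noncomm_ring
      rw [mul_add, mul_smul_comm, mul_smul_comm, mul_one, b1]
    rw [a1]
    match_scalars <;> ring
  have h3 : K * A ^ 3 = (q⁻¹ ^ 6) • (A ^ 3 * K) + (1 - q⁻¹ ^ 6) • A ^ 2 := by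
    have e : K * A ^ 3 = (K * A ^ 2) * A := by noncomm_ring
    rw [e, h2, add_mul, smul_mul_assoc, smul_mul_assoc, mul_assoc, h1]
    have a1 : A ^ 2 * ((q⁻¹ ^ 2) • (A * K) + (1 - q⁻¹ ^ 2) • (1 : Module.End F V))
        = (q⁻¹ ^ 2) • (A ^ 3 * K) + (1 - q⁻¹ ^ 2) • A ^ 2 := by
      have b1 : A ^ 2 * (A * K) = A ^ 3 * K := by noncomm_ring
      rw [mul_add, mul_smul_comm, mul_smul_comm, mul_one, b1]
    have a2 : A * A = A ^ 2 := by noncomm_ring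
    rw [a1, a2]
    match_scalars <;> ring
  set r : F := q ^ 2 + 1 + q⁻¹ ^ 2 with hr
  -- Serre relation for K
  have hK : A ^ 3 * K - r • (A ^ 2 * K * A) + r • (A * K * A ^ 2) - K * A ^ 3 = 0 := by
    have eA2 : A ^ 2 * K * A = A ^ 2 * (K * A) := by noncomm_ring
    have eA1 : A * K * A ^ 2 = A * (K * A ^ 2) := by noncomm_ring
    rw [eA2, eA1, h1, h2, h3, mul_add, mul_add, mul_smul_comm, mul_smul_comm,
      mul_smul_comm, mul_smul_comm, mul_one]
    have e1 : A ^ 2 * (A * K) = A ^ 3 * K := by noncomm_ring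
    have e2 : A * (A ^ 2 * K) = A ^ 3 * K := by noncomm_ring
    have e3 : A * A = A ^ 2 := by noncomm_ring
    rw [e1, e2, e3]
    have key1 : (1 : F) - r * q⁻¹ ^ 2 + r * q⁻¹ ^ 4 - q⁻¹ ^ 6 = 0 := by
      rw [hr]
      linear_combination ((q * q⁻¹ + 1) * (q⁻¹ ^ 2 - 1)) * hu
    have key2 : -(r * (1 - q⁻¹ ^ 2)) + r * (1 - q⁻¹ ^ 4) - (1 - q⁻¹ ^ 6) = 0 := by
      rw [hr]
      linear_combination ((q * q⁻¹ + 1) * (1 - q⁻¹ ^ 2)) * hu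
    have goalEq : A ^ 3 * K - r • ((q⁻¹ ^ 2) • (A ^ 3 * K) + (1 - q⁻¹ ^ 2) • A ^ 2)
        + r • ((q⁻¹ ^ 4) • (A ^ 3 * K) + (1 - q⁻¹ ^ 4) • A ^ 2)
        - ((q⁻¹ ^ 6) • (A ^ 3 * K) + (1 - q⁻¹ ^ 6) • A ^ 2)
        = ((1 : F) - r * q⁻¹ ^ 2 + r * q⁻¹ ^ 4 - q⁻¹ ^ 6) • (A ^ 3 * K)
          + (-(r * (1 - q⁻¹ ^ 2)) + r * (1 - q⁻¹ ^ 4) - (1 - q⁻¹ ^ 6)) • A ^ 2 := by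
      match_scalars <;> ring
    rw [goalEq, key1, key2, zero_smul, zero_smul, add_zero]
  -- combine
  have expand : A ^ 3 * (t • Astar + (1 - t) • K)
      - r • (A ^ 2 * (t • Astar + (1 - t) • K) * A)
      + r • (A * (t • Astar + (1 - t) • K) * A ^ 2)
      - (t • Astar + (1 - t) • K) * A ^ 3
      = t • (A ^ 3 * Astar - r • (A ^ 2 * Astar * A) + r • (A * Astar * A ^ 2) - Astar * A ^ 3)
        + (1 - t) • (A ^ 3 * K - r • (A ^ 2 * K * A) + r • (A * K * A ^ 2) - K * A ^ 3) := by
    simp only [mul_add, add_mul, mul_smul_comm, smul_mul_assoc, smul_add, smul_sub, smul_smul]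
    match_scalars <;> ring
  rw [expand, hSerre, hK, smul_zero, smul_zero, add_zero]
end

section
/- Let B, B* be linear maps on V satisfying B³B* − [3]_q B²B*B + [3]_q BB*B² − B*B³ = 0 where [3]_q = q²+1+q^{−2} and q is not a root of unity. Suppose B is diagonalizable with eigenvalues θ_i = q^{2i−d} (0 ≤ i ≤ d) and primitive idempotents E_i. Then for each i, B* E_i V ⊆ E_{i−1}V + E_i V + E_{i+1}V (with E_{−1} = E_{d+1} = 0). -/
/-! Multiplying the q-Serre relation on the right by `E i` gives `p(B) B* E i = 0` for
`p = (x - q²θᵢ)(x - θᵢ)(x - q⁻²θᵢ)`; multiplying that on the left by `E j` gives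
`p(θⱼ) E j B* E i = 0`. As `q` has infinite order, `p(θⱼ) ≠ 0` unless `|i - j| ≤ 1`. -/

open Function

theorem zpow_injective_of_not_isOfFinOrder {F : Type*} [Field F] {q : F} (hq : q ≠ 0)
    (hfin : ¬IsOfFinOrder q) : Injective fun n : ℤ => q ^ n := by
  have hu : Injective fun n : ℤ => Units.mk0 q hq ^ n :=
    injective_zpow_iff_not_isOfFinOrder.mpr (by rwa [← Units.isOfFinOrder_val])
  intro m n hmn
  exact hu (Units.ext (by simpa using hmn))

theorem sub_mul_sub_mul_sub_ne_zero {F : Type*} [Field F] {q : F} (hq : q ≠ 0)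
    (hfin : ¬IsOfFinOrder q) {d i j : ℤ} (hup : j ≠ i + 1) (hdiag : j ≠ i) (hdown : j ≠ i - 1) :
    (q ^ (2 * j - d) - q ^ 2 * q ^ (2 * i - d)) * (q ^ (2 * j - d) - q ^ (2 * i - d)) *
      (q ^ (2 * j - d) - q⁻¹ ^ 2 * q ^ (2 * i - d)) ≠ 0 := by
  have hinj := zpow_injective_of_not_isOfFinOrder hq hfin
  have hraise : q ^ 2 * q ^ (2 * i - d) = q ^ (2 * (i + 1) - d) := by
    rw [← zpow_natCast, ← zpow_add₀ hq]
    ring_nf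
  have hlower : q⁻¹ ^ 2 * q ^ (2 * i - d) = q ^ (2 * (i - 1) - d) := by
    rw [inv_pow, ← zpow_natCast, ← zpow_neg, ← zpow_add₀ hq]
    ring_nf
  rw [hraise, hlower]
  refine mul_ne_zero (mul_ne_zero ?_ ?_) ?_ <;> exact sub_ne_zero.mpr (hinj.ne (by omega))

section Algebra

variable {K A : Type*} [Field K] [Ring A] [Algebra K A]

theorem mul_sub_algebraMap_of_mul_eq_smul {E B : A} {θ : K} (h : E * B = θ • E) (a : K) :
    E * (B - algebraMap K A a) = (θ - a) • E := by
  rw [mul_sub, h, Algebra.algebraMap_eq_smul_one, mul_smul_comm, mul_one, sub_smul]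

theorem mul_eq_smul_of_sum_eq_one {ι : Type*} {s : Finset ι} {E : ι → A} {B : A} {θ : ι → K}
    {j : ι} (hj : j ∈ s) (hsum : ∑ i ∈ s, E i = 1) (horth : ∀ i ∈ s, i ≠ j → E j * E i = 0)
    (hidem : E j * E j = E j) (heig : ∀ i ∈ s, B * E i = θ i • E i) :
    E j * B = θ j • E j := by
  calc E j * B = ∑ i ∈ s, E j * (B * E i) := by
        rw [← Finset.mul_sum, ← Finset.mul_sum, hsum, mul_one]
    _ = ∑ i ∈ s, θ i • (E j * E i) := by
        refine Finset.sum_congr rfl fun i hi => ?_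
        rw [heig i hi, mul_smul_comm]
    _ = θ j • E j := by
        rw [Finset.sum_eq_single_of_mem j hj fun i hi hij => by rw [horth i hi hij, smul_zero],
          hidem]

def IsQSerre (q : K) (B X : A) : Prop :=
  B ^ 3 * X - (q ^ 2 + 1 + q⁻¹ ^ 2) • (B ^ 2 * X * B)
    + (q ^ 2 + 1 + q⁻¹ ^ 2) • (B * X * B ^ 2) - X * B ^ 3 = 0

/-- `(x - q²θ)(x - θ)(x - q⁻²θ) = x³ - [3]_q θ x² + [3]_q θ² x - θ³`. -/
theorem IsQSerre.cubic_mul_mul_eq_zero {q θ : K} {B X E : A} (hS : IsQSerre q B X) (hq : q ≠ 0)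
    (hE : B * E = θ • E) :
    (B - algebraMap K A (q ^ 2 * θ)) * (B - algebraMap K A θ) *
      (B - algebraMap K A (q⁻¹ ^ 2 * θ)) * X * E = 0 := by
  have h := congrArg (· * E) hS
  simp only [Algebra.algebraMap_eq_smul_one, sub_mul, mul_sub, smul_mul_assoc, mul_smul_comm,
    one_mul, mul_one, add_mul, pow_succ, pow_zero, mul_assoc, hE, smul_sub, zero_mul] at h ⊢
  rw [← h]
  match_scalars <;> field_simp <;> ring

theorem IsQSerre.mul_mul_eq_zero {q θ μ : K} {B X E E' : A} (hS : IsQSerre q B X) (hq : q ≠ 0)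
    (hE : B * E = θ • E) (hE' : E' * B = μ • E')
    (hgap : (μ - q ^ 2 * θ) * (μ - θ) * (μ - q⁻¹ ^ 2 * θ) ≠ 0) : E' * X * E = 0 := by
  have h := congrArg (E' * ·) (hS.cubic_mul_mul_eq_zero hq hE)
  simp only [mul_zero, ← mul_assoc, mul_sub_algebraMap_of_mul_eq_smul hE', smul_mul_assoc,
    smul_smul] at h
  exact (smul_eq_zero.mp h).resolve_left hgap

end Algebra

theorem Submodule.mem_of_sum_eq_one {R M ι : Type*} [Semiring R] [AddCommMonoid M] [Module R M]
    {s : Finset ι} {E : ι → Module.End R M} (hsum : ∑ i ∈ s, E i = 1) {p : Submodule R M}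
    {w : M} (h : ∀ i ∈ s, E i w ∈ p) : w ∈ p := by
  have hw : w = ∑ i ∈ s, E i w := by rw [← LinearMap.sum_apply, hsum, Module.End.one_apply]
  exact hw ▸ p.sum_mem h

theorem stmt16_general {F V : Type*} [Field F] [AddCommGroup V] [Module F V]
    (q : F) (hq : q ≠ 0) (hroot : ∀ n : ℕ, 0 < n → q ^ n ≠ 1)
    (d : ℕ) (B Bstar : Module.End F V) (E : ℕ → Module.End F V)
    (hsum : ∑ i ∈ Finset.range (d + 1), E i = 1)
    (horth : ∀ i j, i ≤ d → j ≤ d → E i * E j = if i = j then E i else 0)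
    (heig : ∀ i, i ≤ d → B * E i = q ^ (2 * (i : ℤ) - d) • E i)
    (hSerre : B ^ 3 * Bstar - (q ^ 2 + 1 + q⁻¹ ^ 2) • (B ^ 2 * Bstar * B)
      + (q ^ 2 + 1 + q⁻¹ ^ 2) • (B * Bstar * B ^ 2) - Bstar * B ^ 3 = 0) :
    ∀ i, i ≤ d → ∀ v : V,
      Bstar (E i v) ∈
        LinearMap.range (E (i - 1)) ⊔ LinearMap.range (E i) ⊔ LinearMap.range (E (i + 1)) := by
  intro i hi v
  have hfin : ¬IsOfFinOrder q := by
    rw [isOfFinOrder_iff_pow_eq_one]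
    rintro ⟨n, hn, hqn⟩
    exact hroot n hn hqn
  have hleft : ∀ j ≤ d, E j * B = q ^ (2 * (j : ℤ) - d) • E j := fun j hj =>
    mul_eq_smul_of_sum_eq_one (Finset.mem_range_succ_iff.mpr hj) hsum
      (fun k hk hkj => by rw [horth j k hj (Finset.mem_range_succ_iff.mp hk), if_neg hkj.symm])
      (by rw [horth j j hj hj, if_pos rfl])
      (fun k hk => heig k (Finset.mem_range_succ_iff.mp hk))
  refine Submodule.mem_of_sum_eq_one hsum fun j hj => ?_
  rw [Finset.mem_range_succ_iff] at hj
  by_cases hnear : j = i - 1 ∨ j = i ∨ j = i + 1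
  · rcases hnear with rfl | rfl | rfl
    · exact Submodule.mem_sup_left (Submodule.mem_sup_left (LinearMap.mem_range_self _ _))
    · exact Submodule.mem_sup_left (Submodule.mem_sup_right (LinearMap.mem_range_self _ _))
    · exact Submodule.mem_sup_right (LinearMap.mem_range_self _ _)
  · have hzero : E j * Bstar * E i = 0 :=
      IsQSerre.mul_mul_eq_zero hSerre hq (heig i hi) (hleft j hj)
        (sub_mul_sub_mul_sub_ne_zero hq hfin (by omega) (by omega) (by omega))
    change (E j * Bstar * E i) v ∈ _
    rw [hzero]
    exact Submodule.zero_mem _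

theorem stmt16 {F V : Type*} [Field F] [IsAlgClosed F] [AddCommGroup V] [Module F V]
    [FiniteDimensional F V] [Nontrivial V]
    (q : F) (hq : q ≠ 0) (hroot : ∀ n : ℕ, 0 < n → q ^ n ≠ 1)
    (d : ℕ) (B Bstar : Module.End F V) (E : ℕ → Module.End F V)
    (hsum : ∑ i ∈ Finset.range (d + 1), E i = 1)
    (horth : ∀ i j, i ≤ d → j ≤ d → E i * E j = if i = j then E i else 0)
    (heig : ∀ i, i ≤ d → B * E i = q ^ (2 * (i : ℤ) - d) • E i)
    (hEzero : ∀ j, d < j → E j = 0)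
    (hSerre : B ^ 3 * Bstar - (q ^ 2 + 1 + q⁻¹ ^ 2) • (B ^ 2 * Bstar * B)
      + (q ^ 2 + 1 + q⁻¹ ^ 2) • (B * Bstar * B ^ 2) - Bstar * B ^ 3 = 0) :
    ∀ i, i ≤ d → ∀ v : V,
      Bstar (E i v) ∈
        LinearMap.range (E (i - 1)) ⊔ LinearMap.range (E i) ⊔ LinearMap.range (E (i + 1)) :=
  stmt16_general q hq hroot d B Bstar E hsum horth heig hSerre
end

section
/- Let V = U₀ ⊕ ⋯ ⊕ U_d with each U_i nonzero, and let B* : V → V satisfy (B* − θ*_i I)U_i ⊆ U_{i−1} for 0 ≤ i ≤ d (U_{−1} = 0), where θ*₀,…,θ*_d are distinct scalars. Then B* is diagonalizable with eigenvalues θ*₀,…,θ*_d, and for each i the dimension of the θ*_i-eigenspace of B* equals dim U_i. -/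
theorem stmt17 {F V : Type*} [Field F] [AddCommGroup V] [Module F V]
    [FiniteDimensional F V]
    (d : ℕ) (U : ℕ → Submodule F V) (θ : ℕ → F)
    (hbot : ∀ i, d < i → U i = ⊥)
    (hnz : ∀ i, i ≤ d → U i ≠ ⊥)
    (hind : iSupIndep U)
    (hspan : (⨆ i, U i) = ⊤)
    (hdist : ∀ i j, i ≤ d → j ≤ d → θ i = θ j → i = j)
    (Bstar : Module.End F V)
    (hB0 : ∀ v ∈ U 0, Bstar v = θ 0 • v)
    (hBstar : ∀ i, 1 ≤ i → i ≤ d → ∀ v ∈ U i, Bstar v - θ i • v ∈ U (i - 1)) :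
    (⨆ i ∈ Finset.range (d + 1), Module.End.eigenspace Bstar (θ i)) = ⊤ ∧
      ∀ i, i ≤ d →
        Module.finrank F (Module.End.eigenspace Bstar (θ i)) = Module.finrank F (U i) := by
  set E : ℕ → Submodule F V := fun i => Module.End.eigenspace Bstar (θ i) with hE
  set W : ℕ → Submodule F V := fun i => ⨆ j ∈ Finset.range (i + 1), U j with hW
  set S : ℕ → Submodule F V := fun i => ⨆ j ∈ Finset.range (i + 1), E j with hS
  -- basic facts
  have hUW : ∀ j i : ℕ, j ≤ i → U j ≤ W i := fun j i hj =>
    le_biSup U (Finset.mem_range.mpr (Nat.lt_succ_of_le hj))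
  have hES : ∀ j i : ℕ, j ≤ i → E j ≤ S i := fun j i hj =>
    le_biSup E (Finset.mem_range.mpr (Nat.lt_succ_of_le hj))
  have hWmono : ∀ i j : ℕ, i ≤ j → W i ≤ W j := fun i j hij =>
    iSup_le fun l => iSup_le fun hl => hUW l j
      (le_trans (Nat.lt_succ_iff.mp (Finset.mem_range.mp hl)) hij)
  have hSmono : ∀ i j : ℕ, i ≤ j → S i ≤ S j := fun i j hij =>
    iSup_le fun l => iSup_le fun hl => hES l j
      (le_trans (Nat.lt_succ_iff.mp (Finset.mem_range.mp hl)) hij)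
  have hWd : W d = ⊤ := by
    rw [eq_top_iff, ← hspan]
    refine iSup_le fun i => ?_
    rcases le_or_gt i d with h | h
    · exact hUW i d h
    · rw [hbot i h]; exact bot_le
  have hWsucc : ∀ i : ℕ, W (i + 1) = U (i + 1) ⊔ W i := by
    intro i
    simp only [hW]
    rw [show Finset.range (i + 1 + 1) = insert (i + 1) (Finset.range (i + 1)) from
      Finset.range_add_one]
    exact Finset.iSup_insert _ _ _
  have hSsucc : ∀ i : ℕ, S (i + 1) = E (i + 1) ⊔ S i := by
    intro i
    simp only [hS]
    rw [show Finset.range (i + 1 + 1) = insert (i + 1) (Finset.range (i + 1)) from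
      Finset.range_add_one]
    exact Finset.iSup_insert _ _ _
  -- disjointness
  have hdisjU : ∀ m : ℕ, Disjoint (U (m + 1)) (W m) := by
    intro m
    refine (hind (m + 1)).mono_right ?_
    refine iSup_le fun l => iSup_le fun hl => ?_
    have hlm : l ≠ m + 1 := by have := Finset.mem_range.mp hl; omega
    exact le_iSup_of_le l (le_iSup_of_le hlm le_rfl)
  have hdisjE : ∀ m : ℕ, m + 1 ≤ d → Disjoint (E (m + 1)) (S m) := by
    intro m hmd
    refine (Module.End.eigenspaces_iSupIndep Bstar (θ (m + 1))).mono_right ?_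
    refine iSup_le fun l => iSup_le fun hl => ?_
    have hlm : l ≤ m := Nat.lt_succ_iff.mp (Finset.mem_range.mp hl)
    have hne : θ l ≠ θ (m + 1) := fun hh => by
      have := hdist l (m + 1) (by omega) hmd hh; omega
    exact le_iSup_of_le (θ l) (le_iSup_of_le hne le_rfl)
  -- invariance of W i under Bstar
  have hWinv : ∀ i : ℕ, ∀ v ∈ W i, Bstar v ∈ W i := by
    intro i
    have key : Submodule.map Bstar (W i) ≤ W i := by
      simp only [hW, Submodule.map_iSup]
      refine iSup_le fun j => iSup_le fun hj => ?_
      have hji : j ≤ i := Nat.lt_succ_iff.mp (Finset.mem_range.mp hj)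
      rintro x ⟨v, hv, rfl⟩
      rcases Nat.eq_zero_or_pos j with rfl | hj1
      · rw [hB0 v hv]
        exact hUW 0 i hji (Submodule.smul_mem _ _ hv)
      rcases le_or_gt j d with hjd | hjd
      · have h1 : Bstar v - θ j • v ∈ U (j - 1) := hBstar j hj1 hjd v hv
        have h2 : Bstar v = (Bstar v - θ j • v) + θ j • v := by abel
        rw [h2]
        exact (W i).add_mem (hUW (j - 1) i (le_trans (Nat.sub_le j 1) hji) h1)
          (hUW j i hji (Submodule.smul_mem _ _ hv))
      · rw [hbot j hjd] at hv
        have hv0 : v = 0 := by simpa using hv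
        rw [hv0, map_zero]
        exact (W i).zero_mem
    intro v hv
    exact key ⟨v, hv, rfl⟩
  -- E k ≤ W k for k ≤ d, by descending induction
  have hEW : ∀ k, k ≤ d → E k ≤ W k := by
    intro k hk
    have key : ∀ n : ℕ, E k ≤ W (max k (d - n)) := by
      intro n
      induction n with
      | zero =>
        rw [Nat.sub_zero, max_eq_right hk, hWd]
        exact le_top
      | succ n ih =>
        rcases le_or_gt (d - n) k with h | h
        · rw [max_eq_left (by omega : d - (n + 1) ≤ k)]
          rwa [max_eq_left h] at ih
        · obtain ⟨m, hm⟩ : ∃ m, d - n = m + 1 := ⟨d - n - 1, by omega⟩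
          have hkm : k ≤ m := by omega
          have hmd : m + 1 ≤ d := by omega
          rw [show max k (d - (n + 1)) = m by omega]
          rw [max_eq_right (le_of_lt h), hm, hWsucc m] at ih
          intro v hv
          obtain ⟨u, hu, w, hw, rfl⟩ := Submodule.mem_sup.mp (ih hv)
          have heig : Bstar (u + w) = θ k • (u + w) := Module.End.mem_eigenspace_iff.mp hv
          have hz : Bstar u - θ (m + 1) • u ∈ U m := by
            simpa using hBstar (m + 1) (by omega) hmd u hu
          have hid : (θ k - θ (m + 1)) • u =
              (Bstar w + (Bstar u - θ (m + 1) • u)) - θ k • w := by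
            have h3 : θ k • u = Bstar u + Bstar w - θ k • w := by
              have : Bstar u + Bstar w = θ k • (u + w) := by rw [← map_add, heig]
              rw [this]; module
            rw [sub_smul, h3]; module
          have hmem : (θ k - θ (m + 1)) • u ∈ W m := by
            rw [hid]
            exact Submodule.sub_mem _
              (Submodule.add_mem _ (hWinv m w hw) (hUW m m le_rfl hz))
              (Submodule.smul_mem _ _ hw)
          have hu0 : u = 0 := by
            have h0 : (θ k - θ (m + 1)) • u = 0 :=
              Submodule.disjoint_def.mp (hdisjU m) _ (Submodule.smul_mem _ _ hu) hmem
            have hne : θ k - θ (m + 1) ≠ 0 := sub_ne_zero.mpr fun hh => by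
              have := hdist k (m + 1) hk hmd hh; omega
            exact (smul_eq_zero.mp h0).resolve_left hne
          rw [hu0, zero_add]
          exact hw
    have := key d
    rwa [Nat.sub_self, max_eq_left (Nat.zero_le k)] at this
  -- U j ≤ S j for j ≤ d, by induction
  have hUS : ∀ j, j ≤ d → U j ≤ S j := by
    intro j
    induction j with
    | zero =>
      intro _ v hv
      exact hES 0 0 le_rfl (Module.End.mem_eigenspace_iff.mpr (hB0 v hv))
    | succ m ih =>
      intro hjd v hv
      have hmd : m ≤ d := by omega
      have hsurj : S m ≤ Submodule.map (Bstar - θ (m + 1) • (1 : Module.End F V)) (S m) := by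
        refine iSup_le fun l => iSup_le fun hl => ?_
        intro x hx
        have hll : l ≤ m := Nat.lt_succ_iff.mp (Finset.mem_range.mp hl)
        have hθ : θ l - θ (m + 1) ≠ 0 := sub_ne_zero.mpr fun hh => by
          have := hdist l (m + 1) (by omega) hjd hh; omega
        refine Submodule.mem_map.mpr
          ⟨(θ l - θ (m + 1))⁻¹ • x, hES l m hll (Submodule.smul_mem _ _ hx), ?_⟩
        have hxe : Bstar x = θ l • x := Module.End.mem_eigenspace_iff.mp hx
        rw [LinearMap.sub_apply, LinearMap.smul_apply, Module.End.one_apply, map_smul, hxe]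
        rw [smul_smul, smul_smul, ← sub_smul,
          show (θ l - θ (m + 1))⁻¹ * θ l - θ (m + 1) * (θ l - θ (m + 1))⁻¹ = 1 by
            field_simp, one_smul]
      have hv' : Bstar v - θ (m + 1) • v ∈ S m := by
        have := hBstar (m + 1) (by omega) hjd v hv
        simp only [Nat.add_sub_cancel] at this
        exact ih hmd this
      obtain ⟨w, hw, hwe⟩ := Submodule.mem_map.mp (hsurj hv')
      rw [LinearMap.sub_apply, LinearMap.smul_apply, Module.End.one_apply] at hwe
      have hvw : v - w ∈ E (m + 1) := by
        refine Module.End.mem_eigenspace_iff.mpr ?_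
        rw [map_sub]
        rw [show Bstar w = (Bstar w - θ (m + 1) • w) + θ (m + 1) • w from by module, hwe]
        module
      have hveq : v = (v - w) + w := by abel
      rw [hveq]
      exact (S (m + 1)).add_mem (hES (m + 1) (m + 1) le_rfl hvw) (hSmono m (m + 1) (by omega) hw)
  -- W i = S i for i ≤ d
  have hWS : ∀ i, i ≤ d → W i = S i := by
    intro i hi
    refine le_antisymm ?_ ?_
    · exact iSup_le fun j => iSup_le fun hj =>
        le_trans (hUS j (le_trans (Nat.lt_succ_iff.mp (Finset.mem_range.mp hj)) hi))
          (hSmono j i (Nat.lt_succ_iff.mp (Finset.mem_range.mp hj)))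
    · exact iSup_le fun j => iSup_le fun hj =>
        le_trans (hEW j (le_trans (Nat.lt_succ_iff.mp (Finset.mem_range.mp hj)) hi))
          (hWmono j i (Nat.lt_succ_iff.mp (Finset.mem_range.mp hj)))
  constructor
  · show S d = ⊤
    exact (hWS d le_rfl).symm.trans hWd
  · intro i hid
    show Module.finrank F (E i) = Module.finrank F (U i)
    rcases i with _ | i
    · have hS0 : S 0 = E 0 := by simp [hS]
      have hW0 : W 0 = U 0 := by simp [hW]
      have hEU : E 0 = U 0 := by rw [← hS0, ← hWS 0 (Nat.zero_le d), hW0]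
      rw [hEU]
    · have hd1 : Module.finrank F (W (i + 1)) =
          Module.finrank F (U (i + 1)) + Module.finrank F (W i) := by
        rw [hWsucc i]
        have h := Submodule.finrank_sup_add_finrank_inf_eq (U (i + 1)) (W i)
        rw [(hdisjU i).eq_bot, finrank_bot, add_zero] at h
        exact h
      have hd2 : Module.finrank F (S (i + 1)) =
          Module.finrank F (E (i + 1)) + Module.finrank F (S i) := by
        rw [hSsucc i]
        have h := Submodule.finrank_sup_add_finrank_inf_eq (E (i + 1)) (S i)
        rw [(hdisjE i hid).eq_bot, finrank_bot, add_zero] at h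
        exact h
      rw [hWS (i + 1) hid, hWS i (by omega)] at hd1
      rw [hd2] at hd1
      omega
end

section
/- In the setting of the previous statement, additionally the θ*₀-eigenspace of B* equals U₀, i.e., U₀ = ker(B* − θ*₀ I). -/
theorem stmt18 {F V : Type*} [Field F] [AddCommGroup V] [Module F V]
    [FiniteDimensional F V]
    (d : ℕ) (U : ℕ → Submodule F V) (θ : ℕ → F)
    (hbot : ∀ i, d < i → U i = ⊥)
    (hnz : ∀ i, i ≤ d → U i ≠ ⊥)
    (hind : iSupIndep U)
    (hspan : (⨆ i, U i) = ⊤)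
    (hdist : ∀ i j, i ≤ d → j ≤ d → θ i = θ j → i = j)
    (Bstar : Module.End F V)
    (hB0 : ∀ v ∈ U 0, Bstar v = θ 0 • v)
    (hBstar : ∀ i, 1 ≤ i → i ≤ d → ∀ v ∈ U i, Bstar v - θ i • v ∈ U (i - 1)) :
    U 0 = LinearMap.ker (Bstar - θ 0 • (1 : Module.End F V)) := by
  set S : ℕ → Submodule F V := fun k => ⨆ i, ⨆ _ : i ≤ k, U i with hS
  have hUS : ∀ i k, i ≤ k → U i ≤ S k := fun i k hik => le_iSup₂_of_le i hik le_rfl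
  -- invariance of S k under Bstar
  have hinv : ∀ k, ∀ v ∈ S k, Bstar v ∈ S k := by
    intro k
    have : S k ≤ Submodule.comap Bstar (S k) := by
      refine iSup₂_le fun i hik => ?_
      intro v hv
      simp only [Submodule.mem_comap]
      rcases Nat.eq_zero_or_pos i with h0 | h1
      · subst h0
        rw [hB0 v hv]
        exact Submodule.smul_mem _ _ (hUS 0 k (Nat.zero_le _) hv)
      · rcases le_or_gt i d with hid | hid
        · have h1' := hBstar i h1 hid v hv
          have : Bstar v = (Bstar v - θ i • v) + θ i • v := by abel
          rw [this]
          exact Submodule.add_mem _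
            (hUS (i-1) k (le_trans (Nat.sub_le i 1) hik) h1')
            (Submodule.smul_mem _ _ (hUS i k hik hv))
        · have : v = 0 := by simpa [hbot i hid] using hv
          simp [this]
    exact fun v hv => this hv
  -- decomposition S (k+1) = S k ⊔ U (k+1)
  have hdec : ∀ k, S (k+1) = S k ⊔ U (k+1) := by
    intro k
    apply le_antisymm
    · refine iSup₂_le fun i hik => ?_
      rcases Nat.lt_succ_iff_lt_or_eq.mp (Nat.lt_succ_of_le hik) with h | h
      · exact le_sup_of_le_left (hUS i k (Nat.lt_succ_iff.mp h))
      · subst h; exact le_sup_right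
    · exact sup_le (iSup₂_le fun i hik => hUS i (k+1) (le_trans hik (Nat.le_succ k)))
        (hUS (k+1) (k+1) le_rfl)
  -- main claim by induction
  have main : ∀ k, ∀ v ∈ S k, Bstar v - θ 0 • v = 0 → v ∈ U 0 := by
    intro k
    induction k with
    | zero =>
      intro v hv _
      have : S 0 ≤ U 0 := iSup₂_le fun i hi => by
        rw [Nat.le_zero.mp hi]
      exact this hv
    | succ k ih =>
      intro v hv heq
      rw [hdec k] at hv
      obtain ⟨w, hw, u, hu, rfl⟩ := Submodule.mem_sup.mp hv
      have hu0 : u = 0 := by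
        rcases le_or_gt (k+1) d with hkd | hkd
        · -- (θ (k+1) - θ 0) • u ∈ S k ⊓ U (k+1)
          have hr : Bstar u - θ (k+1) • u ∈ U k := by
            simpa using hBstar (k+1) (Nat.le_add_left 1 k) hkd u hu
          have hmemS : (θ (k+1) - θ 0) • u ∈ S k := by
            have hexp : (θ (k+1) - θ 0) • u
                = -((Bstar w - θ 0 • w) + (Bstar u - θ (k+1) • u)) + (Bstar (w + u) - θ 0 • (w + u)) := by
              simp only [map_add, smul_add, sub_smul]
              abel
            rw [hexp, heq]
            rw [add_zero]
            refine Submodule.neg_mem _ (Submodule.add_mem _ ?_ ?_)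
            · exact Submodule.sub_mem _ (hinv k w hw) (Submodule.smul_mem _ _ hw)
            · exact hUS k k le_rfl hr
          have hmemU : (θ (k+1) - θ 0) • u ∈ U (k+1) := Submodule.smul_mem _ _ hu
          have hdisj : Disjoint (U (k+1)) (⨆ j ≠ (k+1), U j) := hind (k+1)
          have hSle : S k ≤ ⨆ j ≠ (k+1), U j := by
            refine iSup₂_le fun i hik => le_iSup₂_of_le i ?_ le_rfl
            omega
          have : (θ (k+1) - θ 0) • u = 0 :=
            Submodule.disjoint_def.mp hdisj _ hmemU (hSle hmemS)
          have hθ : θ (k+1) - θ 0 ≠ 0 := by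
            intro h
            have := hdist (k+1) 0 hkd (Nat.zero_le d) (sub_eq_zero.mp h)
            omega
          exact (smul_eq_zero.mp this).resolve_left hθ
        · simpa [hbot (k+1) hkd] using hu
      subst hu0
      rw [add_zero] at heq ⊢
      exact ih w hw heq
  apply le_antisymm
  · intro v hv
    rw [LinearMap.mem_ker]
    simp [LinearMap.sub_apply, LinearMap.smul_apply, Module.End.one_apply, hB0 v hv]
  · intro v hv
    have hvS : v ∈ S d := by
      have htop : (⊤ : Submodule F V) ≤ S d := by
        rw [← hspan]
        refine iSup_le fun i => ?_
        rcases le_or_gt i d with h | h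
        · exact hUS i d h
        · rw [hbot i h]; exact bot_le
      exact htop Submodule.mem_top
    have heq : Bstar v - θ 0 • v = 0 := by
      have := LinearMap.mem_ker.mp hv
      simpa [LinearMap.sub_apply, LinearMap.smul_apply, Module.End.one_apply] using this
    exact main d v hvS heq
end

section
/- Let V = U₀ ⊕ ⋯ ⊕ U_d, θ*₀,…,θ*_d distinct scalars, and suppose A*, B* : V → V satisfy: B* − θ*_i I = t(A* − θ*_i I) on U_i for each i, and (B* − θ*_i I)U_i ⊆ U_{i−1} (U_{−1}=0). Then for 0 ≤ i ≤ d, the restriction to U_i satisfies (B*−θ*₁I)⋯(B*−θ*_iI) = t^i (A*−θ*₁I)⋯(A*−θ*_iI) on U_i, and (B*−θ*₁I)⋯(B*−θ*_iI)U_i ⊆ U₀. -/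
theorem stmt19 {F V : Type*} [Field F] [AddCommGroup V] [Module F V]
    [FiniteDimensional F V]
    (d : ℕ) (t : F) (U : ℕ → Submodule F V) (θ : ℕ → F)
    (hbot : ∀ i, d < i → U i = ⊥)
    (hnz : ∀ i, i ≤ d → U i ≠ ⊥)
    (hind : iSupIndep U)
    (hspan : (⨆ i, U i) = ⊤)
    (hdist : ∀ i j, i ≤ d → j ≤ d → θ i = θ j → i = j)
    (Astar Bstar : Module.End F V)
    (hA0 : ∀ v ∈ U 0, Astar v = θ 0 • v)
    (hAstar : ∀ i, 1 ≤ i → i ≤ d → ∀ v ∈ U i, Astar v - θ i • v ∈ U (i - 1))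
    (hscale : ∀ i, i ≤ d → ∀ v ∈ U i, Bstar v - θ i • v = t • (Astar v - θ i • v))
    (hB0 : ∀ v ∈ U 0, Bstar v = θ 0 • v)
    (hBstar : ∀ i, 1 ≤ i → i ≤ d → ∀ v ∈ U i, Bstar v - θ i • v ∈ U (i - 1)) :
    ∀ i, i ≤ d → ∀ v ∈ U i,
      (((List.range i).map (fun j => Bstar - θ (j + 1) • (1 : Module.End F V))).prod v =
        t ^ i • ((List.range i).map (fun j => Astar - θ (j + 1) • (1 : Module.End F V))).prod v) ∧
      ((List.range i).map (fun j => Bstar - θ (j + 1) • (1 : Module.End F V))).prod v ∈ U 0 := by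
  intro i
  induction i with
  | zero =>
    intro _ v hv
    simpa using hv
  | succ n ih =>
    intro hle v hv
    have hn : n ≤ d := Nat.le_of_succ_le hle
    have hw : Astar v - θ (n + 1) • v ∈ U n := by
      simpa using hAstar (n + 1) (Nat.le_add_left 1 n) hle v hv
    have hB : Bstar v - θ (n + 1) • v = t • (Astar v - θ (n + 1) • v) :=
      hscale (n + 1) hle v hv
    obtain ⟨ih1, ih2⟩ := ih hn _ hw
    have keyB : ((List.range (n + 1)).map
          (fun j => Bstar - θ (j + 1) • (1 : Module.End F V))).prod v
        = ((List.range n).map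
          (fun j => Bstar - θ (j + 1) • (1 : Module.End F V))).prod
            (Bstar v - θ (n + 1) • v) := by
      rw [List.range_succ, List.map_append, List.prod_append]
      simp [Module.End.mul_apply]
    have keyA : ((List.range (n + 1)).map
          (fun j => Astar - θ (j + 1) • (1 : Module.End F V))).prod v
        = ((List.range n).map
          (fun j => Astar - θ (j + 1) • (1 : Module.End F V))).prod
            (Astar v - θ (n + 1) • v) := by
      rw [List.range_succ, List.map_append, List.prod_append]
      simp [Module.End.mul_apply]
    rw [keyB, keyA, hB, map_smul]
    constructor
    · rw [ih1, smul_smul, pow_succ, mul_comm]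
    · exact Submodule.smul_mem _ _ ih2
end
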